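/- If α and β are acceptable sequences of topplings for a configuration η such that each site is toppled the same number of times in α as in β (i.e., m_α = m_β), then the resulting configurations are equal: Φ_α η = Φ_β η. -/
import Mathlib


namespace ARW

/-- The state of a site: `nat n` means `n` active particles, `rho` means one passive particle. -/
inductive Nrho where
  | nat : ℕ → Nrho
  | rho : Nrho
deriving DecidableEq

namespace Nrho

/-- Numerical value used to define the order `0 < ρ < 1 < 2 < ⋯`. -/
def val : Nrho → ℚ
  | nat n => (n : ℚ)
  | rho => 1/2

instance : LE Nrho := ⟨fun a b => a.val ≤ b.val⟩
instance : LT Nrho := ⟨fun a b => a.val < b.val⟩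

/-- Adding one particle: `ρ + 1 = 2`. -/
def addOne : Nrho → Nrho
  | nat n => nat (n + 1)
  | rho => nat 2

/-- Removing one particle (junk value on `0`): `ρ - 1 = 0`. -/
def subOne : Nrho → Nrho
  | nat n => nat (n - 1)
  | rho => nat 0

/-- The sleep operation `n ↦ n·ρ`: `1·ρ = ρ`, `n·ρ = n` for `n ≥ 2`, `ρ·ρ = ρ`
(junk value on `0`). -/
def sleep : Nrho → Nrho
  | nat 0 => nat 0
  | nat 1 => rho
  | nat (n + 2) => nat (n + 2)
  | rho => rho

end Nrho

/-- An instruction at a site: jump to a given site, or fall asleep. -/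
inductive Instr (S : Type) where
  | jump : S → Instr S
  | sleep : Instr S
deriving DecidableEq

/-- A configuration of the activated random walk system. -/
abbrev Config (S : Type) := S → Nrho

/-- A field of instructions `(τ^{x,j})`. -/
abbrev IField (S : Type) := S → ℕ → Instr S

variable {S : Type} [DecidableEq S]

/-- Apply one instruction at site `x`. -/
def applyInstr : Instr S → S → Config S → Config S
  | .jump y, x, η =>
      let η' := Function.update η x (η x).subOne
      Function.update η' y (η' y).addOne
  | .sleep, x, η => Function.update η x (η x).sleep

/-- Topple site `x`: use the next unused instruction at `x` and increment the odometer. -/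
def topple (I : IField S) : Config S × (S → ℕ) → S → Config S × (S → ℕ)
  | (η, h), x => (applyInstr (I x (h x)) x η, Function.update h x (h x + 1))

/-- Topple a finite sequence of sites, in order. -/
def toppleSeq (I : IField S) : Config S × (S → ℕ) → List S → Config S × (S → ℕ)
  | s, [] => s
  | s, x :: α => toppleSeq I (topple I s x) α

/-- `Phi I η α` is the configuration `Φ_α η` obtained from `η` by toppling
the sequence `α` (starting with odometer `0`). -/
def Phi (I : IField S) (η : Config S) (α : List S) : Config S :=
  (toppleSeq I (η, fun _ => 0) α).1

/-- The sequence `α` is acceptable from the state `(η, h)`: each toppled site has value `≥ ρ`,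
i.e. different from `0`, when it is toppled. -/
def AcceptableFrom (I : IField S) : Config S × (S → ℕ) → List S → Prop
  | _, [] => True
  | (η, h), x :: α => η x ≠ Nrho.nat 0 ∧ AcceptableFrom I (topple I (η, h) x) α

/-- The sequence `α` is legal from the state `(η, h)`: each toppled site is unstable,
i.e. has value `≥ 1`, when it is toppled. -/
def LegalFrom (I : IField S) : Config S × (S → ℕ) → List S → Prop
  | _, [] => True
  | (η, h), x :: α => Nrho.nat 1 ≤ η x ∧ LegalFrom I (topple I (η, h) x) α

/-- `α` is an acceptable sequence of topplings for the configuration `η`. -/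
def Acceptable (I : IField S) (η : Config S) (α : List S) : Prop :=
  AcceptableFrom I (η, fun _ => 0) α

/-- `α` is a legal sequence of topplings for the configuration `η`. -/
def Legal (I : IField S) (η : Config S) (α : List S) : Prop :=
  LegalFrom I (η, fun _ => 0) α

/-- Site `x` is stable for `η` if it carries no active particle. -/
def Stable (η : Config S) (x : S) : Prop := η x ≤ Nrho.rho

/-- `η` is stable in `V` if every site of `V` is stable. -/
def StableIn (η : Config S) (V : Finset S) : Prop := ∀ x ∈ V, Stable η x

end ARW

namespace ARW

namespace Nrho

lemma sleep_addOne (v : Nrho) (h : v ≠ .nat 0) : v.addOne.sleep = v.sleep.addOne := by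
  match v with
  | .nat 0 => exact absurd rfl h
  | .nat 1 => rfl
  | .nat (n+2) => rfl
  | .rho => rfl

lemma subOne_addOne (v : Nrho) (h : v ≠ .nat 0) : v.addOne.subOne = v.subOne.addOne := by
  match v with
  | .nat 0 => exact absurd rfl h
  | .nat (n+1) => rfl
  | .rho => rfl

lemma addOne_ne (v : Nrho) : v.addOne ≠ .nat 0 := by cases v <;> simp [addOne]

lemma sleep_ne (v : Nrho) (h : v ≠ .nat 0) : v.sleep ≠ .nat 0 := by
  match v with
  | .nat 0 => exact absurd rfl h
  | .nat 1 => simp [sleep]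
  | .nat (n+2) => simp [sleep]
  | .rho => simp [sleep]

end Nrho

variable {S : Type} [DecidableEq S]
lemma applyInstr_sleep_apply (x z : S) (η : Config S) :
    applyInstr (.sleep) x η z = if z = x then (η x).sleep else η z := by
  simp [applyInstr, Function.update_apply]

lemma applyInstr_jump_apply (w x z : S) (η : Config S) :
    applyInstr (.jump w) x η z =
      if z = w then (if w = x then (η x).subOne.addOne else (η w).addOne)
      else if z = x then (η x).subOne else η z := by
  simp only [applyInstr, Function.update_apply]
  split_ifs <;> simp_all
lemma applyInstr_comm (ix iy : Instr S) (x y : S) (hxy : x ≠ y) (η : Config S)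
    (hx : η x ≠ .nat 0) (hy : η y ≠ .nat 0) :
    applyInstr iy y (applyInstr ix x η) = applyInstr ix x (applyInstr iy y η) := by
  funext z
  cases ix <;> cases iy <;>
    simp only [applyInstr_sleep_apply, applyInstr_jump_apply] <;>
    split_ifs <;> subst_vars <;>
    first
      | rfl
      | (exact absurd rfl hxy)
      | (exact absurd rfl (by assumption))
      | (simp only [Nrho.sleep_addOne _ hx, Nrho.sleep_addOne _ hy,
          Nrho.subOne_addOne _ hx, Nrho.subOne_addOne _ hy]; done)
      | simp_all
lemma topple_fst_ne (I : IField S) (s : Config S × (S → ℕ)) (x y : S) (hxy : x ≠ y)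
    (hy : s.1 y ≠ .nat 0) : (topple I s x).1 y ≠ .nat 0 := by
  obtain ⟨η, h⟩ := s
  simp only [topple]
  cases I x (h x) with
  | jump w =>
    rw [applyInstr_jump_apply]
    split_ifs
    · exact Nrho.addOne_ne _
    · exact Nrho.addOne_ne _
    · exact absurd (by assumption) (Ne.symm hxy)
    · exact hy
  | sleep =>
    rw [applyInstr_sleep_apply, if_neg (Ne.symm hxy)]
    exact hy

lemma topple_comm (I : IField S) (s : Config S × (S → ℕ)) (x y : S)
    (hx : s.1 x ≠ .nat 0) (hy : s.1 y ≠ .nat 0) :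
    topple I (topple I s x) y = topple I (topple I s y) x := by
  by_cases hxy : x = y
  · subst hxy; rfl
  · obtain ⟨η, h⟩ := s
    simp only [topple, Function.update_of_ne hxy, Function.update_of_ne (Ne.symm hxy)]
    exact Prod.ext (applyInstr_comm _ _ _ _ hxy _ hx hy) (Function.update_comm hxy _ _ _)

lemma acceptableFrom_cons {I : IField S} {s : Config S × (S → ℕ)} {x : S} {α : List S} :
    AcceptableFrom I s (x :: α) ↔ s.1 x ≠ Nrho.nat 0 ∧ AcceptableFrom I (topple I s x) α := by
  obtain ⟨η, h⟩ := s
  exact Iff.rfl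

lemma moveToFront (I : IField S) (y : S) (δ : List S) :
    ∀ (γ : List S) (s : Config S × (S → ℕ)), y ∉ γ → s.1 y ≠ .nat 0 →
      AcceptableFrom I s (γ ++ y :: δ) →
      AcceptableFrom I s (y :: (γ ++ δ)) ∧
        toppleSeq I s (γ ++ y :: δ) = toppleSeq I s (y :: (γ ++ δ)) := by
  intro γ
  induction γ with
  | nil => exact fun s _ _ hacc => ⟨hacc, rfl⟩
  | cons x γ' ih =>
    intro s hyγ hy hacc
    have hxy : x ≠ y := fun h => hyγ (by simp [h])
    rw [List.cons_append, acceptableFrom_cons] at hacc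
    obtain ⟨hx, hacc'⟩ := hacc
    have hy' : (topple I s x).1 y ≠ .nat 0 := topple_fst_ne I s x y hxy hy
    have hyγ' : y ∉ γ' := fun h => hyγ (by simp [h])
    obtain ⟨ha1, he1⟩ := ih (topple I s x) hyγ' hy' hacc'
    rw [acceptableFrom_cons] at ha1
    obtain ⟨-, ha2⟩ := ha1
    have hswap := topple_comm I s x y hx hy
    constructor
    · rw [acceptableFrom_cons]
      refine ⟨hy, ?_⟩
      rw [List.cons_append, acceptableFrom_cons]
      refine ⟨topple_fst_ne I s y x (Ne.symm hxy) hx, ?_⟩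
      rw [← hswap]
      exact ha2
    · calc toppleSeq I s ((x :: γ') ++ y :: δ)
          = toppleSeq I (topple I s x) (γ' ++ y :: δ) := rfl
        _ = toppleSeq I (topple I s x) (y :: (γ' ++ δ)) := he1
        _ = toppleSeq I (topple I (topple I s x) y) (γ' ++ δ) := rfl
        _ = toppleSeq I (topple I (topple I s y) x) (γ' ++ δ) := by rw [hswap]
        _ = toppleSeq I s (y :: ((x :: γ') ++ δ)) := rfl

lemma exists_first_split {y : S} {l : List S} (h : y ∈ l) :
    ∃ γ δ, l = γ ++ y :: δ ∧ y ∉ γ := by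
  induction l with
  | nil => cases h
  | cons a l ih =>
    by_cases hay : y = a
    · subst hay; exact ⟨[], l, rfl, by simp⟩
    · have hmem : y ∈ l := by
        rcases List.mem_cons.mp h with h1 | h1
        · exact absurd h1 hay
        · exact h1
      obtain ⟨γ, δ, rfl, hnotin⟩ := ih hmem
      exact ⟨a :: γ, δ, rfl, by simp [hnotin, hay]⟩

lemma key (I : IField S) : ∀ (β α : List S) (s : Config S × (S → ℕ)),
    AcceptableFrom I s α → AcceptableFrom I s β → (∀ x, α.count x = β.count x) →
    toppleSeq I s α = toppleSeq I s β := by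
  intro β
  induction β with
  | nil =>
    intro α s hα _ hm
    have hnil : α = [] := by
      refine List.eq_nil_iff_forall_not_mem.mpr fun x hx => ?_
      have := hm x
      simp only [List.count_nil] at this
      exact List.count_eq_zero.mp this hx
    subst hnil; rfl
  | cons y β' ih =>
    intro α s hα hβ hm
    rw [acceptableFrom_cons] at hβ
    obtain ⟨hy, hβ'⟩ := hβ
    have hyα : y ∈ α := by
      have h1 := hm y
      simp only [List.count_cons_self] at h1
      exact List.count_pos_iff.mp (by omega)
    obtain ⟨γ, δ, rfl, hyγ⟩ := exists_first_split hyα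
    obtain ⟨ha, he⟩ := moveToFront I y δ γ s hyγ hy hα
    rw [acceptableFrom_cons] at ha
    obtain ⟨-, ha'⟩ := ha
    have hm' : ∀ x, (γ ++ δ).count x = β'.count x := by
      intro x
      have h1 := hm x
      by_cases hxy : x = y <;>
        simp only [List.count_append, List.count_cons, hxy, if_pos, if_neg,
          List.count_cons_self] at h1 ⊢ <;>
        omega
    rw [he]
    show toppleSeq I (topple I s y) (γ ++ δ) = toppleSeq I (topple I s y) β'
    exact ih (γ ++ δ) (topple I s y) ha' hβ' hm'
end ARW

open ARW in
/-- **Local abelianness.** If `α` and `β` are acceptable sequences of topplings for `η`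
with `m_α = m_β`, then `Φ_α η = Φ_β η`. -/
theorem local_abelianness {S : Type} [DecidableEq S] (I : IField S) (η : Config S)
    (α β : List S) (hα : Acceptable I η α) (hβ : Acceptable I η β)
    (hm : ∀ x, α.count x = β.count x) :
    Phi I η α = Phi I η β := by
  unfold Phi
  rw [key I β α _ hα hβ hm]
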